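/- arXiv:2305.19786 — 10 statements merged into one kernel-verified Lean document; each statement's English description precedes it below -/
import Mathlib

section
/- The set M_S = {(a,b,μ,ν) ∈ ℝ⁴ : a ≥ 0, b ≥ 0, a·b = 0, a·μ = 0, b·ν = 0, and (a = 0 ∧ b = 0 → μ ≤ 0 ∧ ν ≤ 0)} is not a closed subset of ℝ⁴. -/
theorem MS_not_closed :
    ¬ IsClosed {p : ℝ × ℝ × ℝ × ℝ |
      0 ≤ p.1 ∧ 0 ≤ p.2.1 ∧ p.1 * p.2.1 = 0 ∧ p.1 * p.2.2.1 = 0 ∧ p.2.1 * p.2.2.2 = 0 ∧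
      (p.1 = 0 ∧ p.2.1 = 0 → p.2.2.1 ≤ 0 ∧ p.2.2.2 ≤ 0)} := by
  intro h
  have hmem : ∀ n : ℕ, ((1 / (n + 1 : ℝ), 0, 0, 1) : ℝ × ℝ × ℝ × ℝ) ∈
      {p : ℝ × ℝ × ℝ × ℝ |
      0 ≤ p.1 ∧ 0 ≤ p.2.1 ∧ p.1 * p.2.1 = 0 ∧ p.1 * p.2.2.1 = 0 ∧ p.2.1 * p.2.2.2 = 0 ∧
      (p.1 = 0 ∧ p.2.1 = 0 → p.2.2.1 ≤ 0 ∧ p.2.2.2 ≤ 0)} := by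
    intro n
    have hpos : (0 : ℝ) < (n : ℝ) + 1 := by positivity
    refine ⟨by positivity, le_refl 0, by ring, by ring, by ring, ?_⟩
    rintro ⟨h1, -⟩
    exact absurd h1 (by positivity)
  have hlim : Filter.Tendsto (fun n : ℕ => ((1 / (n + 1 : ℝ), 0, 0, 1) : ℝ × ℝ × ℝ × ℝ))
      Filter.atTop (nhds (0, 0, 0, 1)) := by
    refine Filter.Tendsto.prodMk_nhds ?_ tendsto_const_nhds
    exact tendsto_one_div_add_atTop_nhds_zero_nat
  have := h.mem_of_tendsto hlim (Filter.Eventually.of_forall hmem)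
  have := this.2.2.2.2.2 ⟨rfl, rfl⟩
  norm_num at this
end

section
/- The closure of the set M_S (associated with S-stationarity) equals the set M_M = {(a,b,μ,ν) ∈ ℝ⁴ : a ≥ 0, b ≥ 0, a·b = 0, a·μ = 0, b·ν = 0, and (μ·ν = 0 ∨ (μ < 0 ∧ ν < 0))}. -/
theorem closure_MS_eq_MM :
    closure {p : ℝ × ℝ × ℝ × ℝ |
      0 ≤ p.1 ∧ 0 ≤ p.2.1 ∧ p.1 * p.2.1 = 0 ∧ p.1 * p.2.2.1 = 0 ∧ p.2.1 * p.2.2.2 = 0 ∧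
      (p.1 = 0 ∧ p.2.1 = 0 → p.2.2.1 ≤ 0 ∧ p.2.2.2 ≤ 0)}
    = {p : ℝ × ℝ × ℝ × ℝ |
      0 ≤ p.1 ∧ 0 ≤ p.2.1 ∧ p.1 * p.2.1 = 0 ∧ p.1 * p.2.2.1 = 0 ∧ p.2.1 * p.2.2.2 = 0 ∧
      (p.2.2.1 * p.2.2.2 = 0 ∨ (p.2.2.1 < 0 ∧ p.2.2.2 < 0))} := by
  apply Set.Subset.antisymm
  · -- closure M_S ⊆ M_M
    set T : Set (ℝ × ℝ × ℝ × ℝ) :=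
      {p | 0 ≤ p.1} ∩ {p | 0 ≤ p.2.1} ∩ {p | p.1 * p.2.1 = 0} ∩ {p | p.1 * p.2.2.1 = 0} ∩
        {p | p.2.1 * p.2.2.2 = 0} ∩
        ({p | p.2.2.1 * p.2.2.2 = 0} ∪ ({p | p.2.2.1 ≤ 0} ∩ {p | p.2.2.2 ≤ 0})) with hT
    have c1 : Continuous fun p : ℝ × ℝ × ℝ × ℝ => p.1 := continuous_fst
    have c2 : Continuous fun p : ℝ × ℝ × ℝ × ℝ => p.2.1 := continuous_fst.comp continuous_snd
    have c3 : Continuous fun p : ℝ × ℝ × ℝ × ℝ => p.2.2.1 :=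
      continuous_fst.comp (continuous_snd.comp continuous_snd)
    have c4 : Continuous fun p : ℝ × ℝ × ℝ × ℝ => p.2.2.2 :=
      continuous_snd.comp (continuous_snd.comp continuous_snd)
    have hTclosed : IsClosed T := by
      refine (((((isClosed_le continuous_const c1).inter
        (isClosed_le continuous_const c2)).inter
        (isClosed_eq (c1.mul c2) continuous_const)).inter
        (isClosed_eq (c1.mul c3) continuous_const)).inter
        (isClosed_eq (c2.mul c4) continuous_const)).inter
        ((isClosed_eq (c3.mul c4) continuous_const).union
          ((isClosed_le c3 continuous_const).inter (isClosed_le c4 continuous_const)))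
    have hsub : {p : ℝ × ℝ × ℝ × ℝ |
        0 ≤ p.1 ∧ 0 ≤ p.2.1 ∧ p.1 * p.2.1 = 0 ∧ p.1 * p.2.2.1 = 0 ∧ p.2.1 * p.2.2.2 = 0 ∧
        (p.1 = 0 ∧ p.2.1 = 0 → p.2.2.1 ≤ 0 ∧ p.2.2.2 ≤ 0)} ⊆ T := by
      rintro ⟨a, b, m, v⟩ ⟨ha, hb, hab, ham, hbv, himp⟩
      refine ⟨⟨⟨⟨⟨ha, hb⟩, hab⟩, ham⟩, hbv⟩, ?_⟩
      rcases ha.eq_or_lt with ha0 | ha0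
      · rcases hb.eq_or_lt with hb0 | hb0
        · exact Or.inr (himp ⟨ha0.symm, hb0.symm⟩)
        · -- b > 0, so v = 0
          have hv : v = 0 := by
            rcases mul_eq_zero.mp hbv with h | h
            · exact absurd h.symm hb0.ne
            · exact h
          exact Or.inl (by simp [hv])
      · -- a > 0, so m = 0
        have hm : m = 0 := by
          rcases mul_eq_zero.mp ham with h | h
          · exact absurd h.symm ha0.ne
          · exact h
        exact Or.inl (by simp [hm])
    intro p hp
    have hpT := closure_minimal hsub hTclosed hp
    obtain ⟨⟨⟨⟨⟨ha, hb⟩, hab⟩, ham⟩, hbv⟩, hlast⟩ := hpT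
    refine ⟨ha, hb, hab, ham, hbv, ?_⟩
    rcases hlast with h | ⟨hm, hv⟩
    · exact Or.inl h
    · have hm' : p.2.2.1 ≤ 0 := hm
      have hv' : p.2.2.2 ≤ 0 := hv
      rcases eq_or_lt_of_le hm' with hm0 | hm0
      · exact Or.inl (by rw [hm0, zero_mul])
      · rcases eq_or_lt_of_le hv' with hv0 | hv0
        · exact Or.inl (by rw [hv0, mul_zero])
        · exact Or.inr ⟨hm0, hv0⟩
  · -- M_M ⊆ closure M_S
    rintro ⟨a, b, m, v⟩ ⟨ha, hb, hab, ham, hbv, hmv⟩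
    by_cases hS : (a, b, m, v).1 = 0 ∧ (a, b, m, v).2.1 = 0 →
        (a, b, m, v).2.2.1 ≤ 0 ∧ (a, b, m, v).2.2.2 ≤ 0
    · exact subset_closure ⟨ha, hb, hab, ham, hbv, hS⟩
    · push_neg at hS
      obtain ⟨⟨ha0, hb0⟩, hpos⟩ := hS
      simp only at ha0 hb0
      subst ha0; subst hb0
      have hmv0 : m * v = 0 := by
        rcases hmv with h | ⟨hm, hv⟩
        · exact h
        · exact absurd (hpos hm.le) (not_lt.mpr hv.le)
      rcases mul_eq_zero.mp hmv0 with hm0 | hv0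
      · -- m = 0 : approach along (1/(n+1), 0, 0, v)
        subst hm0
        have htend : Filter.Tendsto (fun n : ℕ => ((1 / (n + 1 : ℝ)), (0 : ℝ), (0 : ℝ), v))
            Filter.atTop (nhds ((0 : ℝ), (0 : ℝ), (0 : ℝ), v)) :=
          tendsto_one_div_add_atTop_nhds_zero_nat.prodMk_nhds
            (tendsto_const_nhds.prodMk_nhds
              (tendsto_const_nhds.prodMk_nhds tendsto_const_nhds))
        refine mem_closure_of_tendsto htend (Filter.Eventually.of_forall fun n => ?_)
        have hpos' : (0 : ℝ) < 1 / (n + 1 : ℝ) := by positivity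
        refine ⟨hpos'.le, le_refl 0, by ring, by ring, by ring, fun h => ?_⟩
        exact absurd h.1 hpos'.ne'
      · -- v = 0 : approach along (0, 1/(n+1), m, 0)
        subst hv0
        have htend : Filter.Tendsto (fun n : ℕ => ((0 : ℝ), (1 / (n + 1 : ℝ)), m, (0 : ℝ)))
            Filter.atTop (nhds ((0 : ℝ), (0 : ℝ), m, (0 : ℝ))) :=
          tendsto_const_nhds.prodMk_nhds
            (tendsto_one_div_add_atTop_nhds_zero_nat.prodMk_nhds
              (tendsto_const_nhds.prodMk_nhds tendsto_const_nhds))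
        refine mem_closure_of_tendsto htend (Filter.Eventually.of_forall fun n => ?_)
        have hpos' : (0 : ℝ) < 1 / (n + 1 : ℝ) := by positivity
        refine ⟨le_refl 0, hpos'.le, by ring, by ring, by ring, fun h => ?_⟩
        exact absurd h.2 hpos'.ne'
end

section
/- The set M_M = {(a,b,μ,ν) ∈ ℝ⁴ : a ≥ 0, b ≥ 0, a·b = 0, a·μ = 0, b·ν = 0, μ·ν = 0 ∨ (μ < 0 ∧ ν < 0)} is a closed subset of ℝ⁴. -/
theorem MM_closed :
    IsClosed {p : ℝ × ℝ × ℝ × ℝ |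
      0 ≤ p.1 ∧ 0 ≤ p.2.1 ∧ p.1 * p.2.1 = 0 ∧ p.1 * p.2.2.1 = 0 ∧ p.2.1 * p.2.2.2 = 0 ∧
      (p.2.2.1 * p.2.2.2 = 0 ∨ (p.2.2.1 < 0 ∧ p.2.2.2 < 0))} := by
  have hset : {p : ℝ × ℝ × ℝ × ℝ |
      0 ≤ p.1 ∧ 0 ≤ p.2.1 ∧ p.1 * p.2.1 = 0 ∧ p.1 * p.2.2.1 = 0 ∧ p.2.1 * p.2.2.2 = 0 ∧
      (p.2.2.1 * p.2.2.2 = 0 ∨ (p.2.2.1 < 0 ∧ p.2.2.2 < 0))} =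
      {p : ℝ × ℝ × ℝ × ℝ |
      0 ≤ p.1 ∧ 0 ≤ p.2.1 ∧ p.1 * p.2.1 = 0 ∧ p.1 * p.2.2.1 = 0 ∧ p.2.1 * p.2.2.2 = 0 ∧
      (p.2.2.1 * p.2.2.2 = 0 ∨ (p.2.2.1 ≤ 0 ∧ p.2.2.2 ≤ 0))} := by
    ext p
    simp only [Set.mem_setOf_eq]
    refine and_congr_right fun _ => and_congr_right fun _ => and_congr_right fun _ =>
      and_congr_right fun _ => and_congr_right fun _ => ?_
    constructor
    · rintro (h | ⟨h1, h2⟩)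
      · exact Or.inl h
      · exact Or.inr ⟨h1.le, h2.le⟩
    · rintro (h | ⟨h1, h2⟩)
      · exact Or.inl h
      · rcases eq_or_lt_of_le h1 with h1' | h1'
        · exact Or.inl (by rw [h1', zero_mul])
        · rcases eq_or_lt_of_le h2 with h2' | h2'
          · exact Or.inl (by rw [h2', mul_zero])
          · exact Or.inr ⟨h1', h2'⟩
  rw [hset]
  have c1 : Continuous fun p : ℝ × ℝ × ℝ × ℝ => p.1 := continuous_fst
  have c2 : Continuous fun p : ℝ × ℝ × ℝ × ℝ => p.2.1 := continuous_fst.comp continuous_snd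
  have c3 : Continuous fun p : ℝ × ℝ × ℝ × ℝ => p.2.2.1 :=
    (continuous_fst.comp continuous_snd).comp continuous_snd
  have c4 : Continuous fun p : ℝ × ℝ × ℝ × ℝ => p.2.2.2 :=
    (continuous_snd.comp continuous_snd).comp continuous_snd
  refine (isClosed_le continuous_const c1).inter <| (isClosed_le continuous_const c2).inter <|
    (isClosed_eq (c1.mul c2) continuous_const).inter <|
    (isClosed_eq (c1.mul c3) continuous_const).inter <|
    (isClosed_eq (c2.mul c4) continuous_const).inter <|
    (isClosed_eq (c3.mul c4) continuous_const).union
      ((isClosed_le c3 continuous_const).inter (isClosed_le c4 continuous_const))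
end

section
/- The set M_M can be decomposed as the union of three convex sets: M_M = {(a,0,0,ν) : a ≥ 0, ν ∈ ℝ} ∪ {(0,b,μ,0) : b ≥ 0, μ ∈ ℝ} ∪ {(0,0,μ,ν) : μ ≤ 0, ν ≤ 0}. -/
theorem MM_decomposition :
    ({p : ℝ × ℝ × ℝ × ℝ |
      0 ≤ p.1 ∧ 0 ≤ p.2.1 ∧ p.1 * p.2.1 = 0 ∧ p.1 * p.2.2.1 = 0 ∧ p.2.1 * p.2.2.2 = 0 ∧
      (p.2.2.1 * p.2.2.2 = 0 ∨ (p.2.2.1 < 0 ∧ p.2.2.2 < 0))}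
      = {p : ℝ × ℝ × ℝ × ℝ | 0 ≤ p.1 ∧ p.2.1 = 0 ∧ p.2.2.1 = 0}
        ∪ {p : ℝ × ℝ × ℝ × ℝ | p.1 = 0 ∧ 0 ≤ p.2.1 ∧ p.2.2.2 = 0}
        ∪ {p : ℝ × ℝ × ℝ × ℝ | p.1 = 0 ∧ p.2.1 = 0 ∧ p.2.2.1 ≤ 0 ∧ p.2.2.2 ≤ 0})
    ∧ Convex ℝ {p : ℝ × ℝ × ℝ × ℝ | 0 ≤ p.1 ∧ p.2.1 = 0 ∧ p.2.2.1 = 0}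
    ∧ Convex ℝ {p : ℝ × ℝ × ℝ × ℝ | p.1 = 0 ∧ 0 ≤ p.2.1 ∧ p.2.2.2 = 0}
    ∧ Convex ℝ {p : ℝ × ℝ × ℝ × ℝ | p.1 = 0 ∧ p.2.1 = 0 ∧ p.2.2.1 ≤ 0 ∧ p.2.2.2 ≤ 0} := by
  refine ⟨?_, ?_, ?_, ?_⟩
  · ext ⟨a, b, μ, ν⟩
    simp only [Set.mem_setOf_eq, Set.mem_union]
    constructor
    · rintro ⟨ha, hb, hab, haμ, hbν, h⟩
      have key : a = 0 → b = 0 →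
          (((0 ≤ a ∧ b = 0 ∧ μ = 0) ∨ (a = 0 ∧ 0 ≤ b ∧ ν = 0)) ∨
            (a = 0 ∧ b = 0 ∧ μ ≤ 0 ∧ ν ≤ 0)) := by
        intro ha0 hb0
        rcases h with hμν | ⟨hμ, hν⟩
        · rcases mul_eq_zero.1 hμν with hμ | hν
          · exact Or.inl (Or.inl ⟨ha, hb0, hμ⟩)
          · exact Or.inl (Or.inr ⟨ha0, hb, hν⟩)
        · exact Or.inr ⟨ha0, hb0, hμ.le, hν.le⟩
      rcases mul_eq_zero.1 hab with ha0 | hb0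
      · rcases mul_eq_zero.1 hbν with hb0 | hν0
        · exact key ha0 hb0
        · exact Or.inl (Or.inr ⟨ha0, hb, hν0⟩)
      · rcases mul_eq_zero.1 haμ with ha0 | hμ0
        · exact key ha0 hb0
        · exact Or.inl (Or.inl ⟨ha, hb0, hμ0⟩)
    · rintro ((⟨h1, h2, h3⟩ | ⟨h1, h2, h3⟩) | ⟨h1, h2, h3, h4⟩)
      · exact ⟨h1, h2.ge, by simp [h2], by simp [h3], by simp [h2], Or.inl (by simp [h3])⟩
      · exact ⟨h1.ge, h2, by simp [h1], by simp [h1], by simp [h3], Or.inl (by simp [h3])⟩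
      · refine ⟨h1.ge, h2.ge, by simp [h1], by simp [h1], by simp [h2], ?_⟩
        rcases eq_or_lt_of_le h3 with h | h
        · exact Or.inl (by simp [h])
        · rcases eq_or_lt_of_le h4 with h' | h'
          · exact Or.inl (by simp [h'])
          · exact Or.inr ⟨h, h'⟩
  · rintro ⟨a, b, μ, ν⟩ hx ⟨a', b', μ', ν'⟩ hy s t hs ht hst
    simp only [Set.mem_setOf_eq] at hx hy ⊢
    obtain ⟨h1, h2, h3⟩ := hx
    obtain ⟨h1', h2', h3'⟩ := hy
    exact ⟨add_nonneg (mul_nonneg hs h1) (mul_nonneg ht h1'),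
      by simp [h2, h2'], by simp [h3, h3']⟩
  · rintro ⟨a, b, μ, ν⟩ hx ⟨a', b', μ', ν'⟩ hy s t hs ht hst
    simp only [Set.mem_setOf_eq] at hx hy ⊢
    obtain ⟨h1, h2, h3⟩ := hx
    obtain ⟨h1', h2', h3'⟩ := hy
    exact ⟨by simp [h1, h1'], add_nonneg (mul_nonneg hs h2) (mul_nonneg ht h2'),
      by simp [h3, h3']⟩
  · rintro ⟨a, b, μ, ν⟩ hx ⟨a', b', μ', ν'⟩ hy s t hs ht hst
    simp only [Set.mem_setOf_eq] at hx hy ⊢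
    obtain ⟨h1, h2, h3, h4⟩ := hx
    obtain ⟨h1', h2', h3', h4'⟩ := hy
    exact ⟨by simp [h1, h1'], by simp [h2, h2'],
      add_nonpos (mul_nonpos_of_nonneg_of_nonpos hs h3)
        (mul_nonpos_of_nonneg_of_nonpos ht h3'),
      add_nonpos (mul_nonpos_of_nonneg_of_nonpos hs h4)
        (mul_nonpos_of_nonneg_of_nonpos ht h4')⟩
end

section
/- For (a,b,μ,ν) ∈ ℝ⁴, define ψ₁(a,b,μ,ν) = max(-a, |b|, |μ|), ψ₂(a,b,μ,ν) = max(-b, |a|, |ν|), ψ₃(a,b,μ,ν) = max(|a|, |b|, μ, ν), and φ₁ = min(ψ₁, ψ₂, ψ₃). Then φ₁(a,b,μ,ν) = 0 if and only if (a,b,μ,ν) ∈ M_M. -/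
theorem phi1_zero_iff_MM (a b μ ν : ℝ) :
    min (min (max (-a) (max |b| |μ|)) (max (-b) (max |a| |ν|)))
        (max |a| (max |b| (max μ ν))) = 0
    ↔ (0 ≤ a ∧ 0 ≤ b ∧ a * b = 0 ∧ a * μ = 0 ∧ b * ν = 0 ∧
        (μ * ν = 0 ∨ (μ < 0 ∧ ν < 0))) := by
  have h1 : (0:ℝ) ≤ max (-a) (max |b| |μ|) :=
    le_trans (abs_nonneg b) (le_trans (le_max_left _ _) (le_max_right _ _))
  have h2 : (0:ℝ) ≤ max (-b) (max |a| |ν|) :=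
    le_trans (abs_nonneg a) (le_trans (le_max_left _ _) (le_max_right _ _))
  have h3 : (0:ℝ) ≤ max |a| (max |b| (max μ ν)) :=
    le_trans (abs_nonneg a) (le_max_left _ _)
  constructor
  · intro h
    have hcase : max (-a) (max |b| |μ|) = 0 ∨ max (-b) (max |a| |ν|) = 0 ∨
        max |a| (max |b| (max μ ν)) = 0 := by
      rcases min_eq_iff.mp h with ⟨h', _⟩ | ⟨h', _⟩
      · rcases min_eq_iff.mp h' with ⟨h'', _⟩ | ⟨h'', _⟩
        · exact Or.inl h''
        · exact Or.inr (Or.inl h'')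
      · exact Or.inr (Or.inr h')
    rcases hcase with hm | hm | hm
    · have ha : -a ≤ 0 := hm ▸ le_max_left _ _
      have hb : |b| ≤ 0 := hm ▸ le_trans (le_max_left _ _) (le_max_right _ _)
      have hμ : |μ| ≤ 0 := hm ▸ le_trans (le_max_right _ _) (le_max_right _ _)
      have hb' : b = 0 := abs_nonpos_iff.mp hb
      have hμ' : μ = 0 := abs_nonpos_iff.mp hμ
      refine ⟨by linarith, by simp [hb'], by simp [hb'], by simp [hμ'], by simp [hb'],
        Or.inl (by simp [hμ'])⟩
    · have hb : -b ≤ 0 := hm ▸ le_max_left _ _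
      have ha : |a| ≤ 0 := hm ▸ le_trans (le_max_left _ _) (le_max_right _ _)
      have hν : |ν| ≤ 0 := hm ▸ le_trans (le_max_right _ _) (le_max_right _ _)
      have ha' : a = 0 := abs_nonpos_iff.mp ha
      have hν' : ν = 0 := abs_nonpos_iff.mp hν
      refine ⟨by simp [ha'], by linarith, by simp [ha'], by simp [ha'], by simp [hν'],
        Or.inl (by simp [hν'])⟩
    · have ha : |a| ≤ 0 := hm ▸ le_max_left _ _
      have hb : |b| ≤ 0 := hm ▸ le_trans (le_max_left _ _) (le_max_right _ _)
      have hμ : μ ≤ 0 := hm ▸ le_trans (le_trans (le_max_left _ _) (le_max_right _ _))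
        (le_max_right _ _)
      have hν : ν ≤ 0 := hm ▸ le_trans (le_trans (le_max_right _ _) (le_max_right _ _))
        (le_max_right _ _)
      have ha' : a = 0 := abs_nonpos_iff.mp ha
      have hb' : b = 0 := abs_nonpos_iff.mp hb
      refine ⟨by simp [ha'], by simp [hb'], by simp [ha'], by simp [ha'], by simp [hb'], ?_⟩
      rcases eq_or_lt_of_le hμ with hμ0 | hμ0
      · exact Or.inl (by rw [hμ0, zero_mul])
      rcases eq_or_lt_of_le hν with hν0 | hν0
      · exact Or.inl (by rw [hν0, mul_zero])
      · exact Or.inr ⟨hμ0, hν0⟩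
  · rintro ⟨ha, hb, hab, haμ, hbν, hor⟩
    have hmin : (0:ℝ) ≤ min (min (max (-a) (max |b| |μ|)) (max (-b) (max |a| |ν|)))
        (max |a| (max |b| (max μ ν))) := le_min (le_min h1 h2) h3
    refine le_antisymm ?_ hmin
    have case1 : a = 0 → ν = 0 → min (min (max (-a) (max |b| |μ|)) (max (-b) (max |a| |ν|)))
        (max |a| (max |b| (max μ ν))) ≤ 0 := by
      intro ha0 hν0
      refine le_trans (min_le_left _ _) (le_trans (min_le_right _ _) ?_)
      simp [ha0, hν0, max_le_iff]
      linarith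
    have case2 : b = 0 → μ = 0 → min (min (max (-a) (max |b| |μ|)) (max (-b) (max |a| |ν|)))
        (max |a| (max |b| (max μ ν))) ≤ 0 := by
      intro hb0 hμ0
      refine le_trans (min_le_left _ _) (le_trans (min_le_left _ _) ?_)
      simp [hb0, hμ0, max_le_iff]
      linarith
    have case3 : a = 0 → b = 0 → μ ≤ 0 → ν ≤ 0 →
        min (min (max (-a) (max |b| |μ|)) (max (-b) (max |a| |ν|)))
        (max |a| (max |b| (max μ ν))) ≤ 0 := by
      intro ha0 hb0 hμ hν
      refine le_trans (min_le_right _ _) ?_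
      simp [ha0, hb0, max_le_iff]
      exact ⟨hμ, hν⟩
    rcases mul_eq_zero.mp hab with h0 | h0
    · -- a = 0
      rcases mul_eq_zero.mp hbν with hb0 | hν0
      · rcases hor with hμν | ⟨hμ, hν⟩
        · rcases mul_eq_zero.mp hμν with hμ0 | hν0
          · exact case2 hb0 hμ0
          · exact case1 h0 hν0
        · exact case3 h0 hb0 hμ.le hν.le
      · exact case1 h0 hν0
    · -- b = 0
      rcases mul_eq_zero.mp haμ with ha0 | hμ0
      · rcases mul_eq_zero.mp hbν with hb0 | hν0
        · rcases hor with hμν | ⟨hμ, hν⟩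
          · rcases mul_eq_zero.mp hμν with hμ0 | hν0
            · exact case2 h0 hμ0
            · exact case1 ha0 hν0
          · exact case3 ha0 h0 hμ.le hν.le
        · exact case1 ha0 hν0
      · exact case2 h0 hμ0
end

section
/- The square of the Fischer–Burmeister function, (a,b) ↦ (√(a² + b²) − a − b)², is continuously differentiable on ℝ². -/
/-!
Expanding the square, `(√(a² + b²) - a - b)² = a² + b² + (a + b)² - 2 (a + b) √(a² + b²)`, and
the last term is a linear image of `x ↦ ‖x‖ • x` on the Euclidean plane. That map is `C¹` on any
real inner product space: away from `0` its derivative `‖x‖ • id + ‖x‖⁻¹ ⟪x, ·⟫ x` has norm at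
most `2 ‖x‖`, so it extends continuously by `0`, which is the derivative at `0` since
`‖h‖ • h = o(h)`.
-/

open Topology Asymptotics

section NormSmulSelf

variable {E : Type*} [NormedAddCommGroup E] [InnerProductSpace ℝ E]

lemma hasFDerivAt_norm {x : E} (hx : x ≠ 0) :
    HasFDerivAt (fun y : E => ‖y‖) (‖x‖⁻¹ • innerSL ℝ x) x := by
  have hsq : HasFDerivAt (fun y : E => ‖y‖ ^ 2) (2 • innerSL ℝ x) x :=
    (hasStrictFDerivAt_norm_sq x).hasFDerivAt
  convert hsq.sqrt (by simpa using hx) using 1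
  · simp [Real.sqrt_sq]
  · ext v
    simp [Real.sqrt_sq (norm_nonneg x), two_smul]
    field_simp
    ring

/-- At `x = 0` both terms vanish, the second because `‖0‖⁻¹ = 0`. -/
noncomputable def fderivNormSmulSelf (x : E) : E →L[ℝ] E :=
  ‖x‖ • ContinuousLinearMap.id ℝ E + ‖x‖⁻¹ • (innerSL ℝ x).smulRight x

lemma hasFDerivAt_norm_smul_self (x : E) :
    HasFDerivAt (fun y : E => ‖y‖ • y) (fderivNormSmulSelf x) x := by
  rcases eq_or_ne x 0 with rfl | hx
  · have h0 : fderivNormSmulSelf (0 : E) = 0 := by simp [fderivNormSmulSelf]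
    rw [h0, hasFDerivAt_iff_isLittleO_nhds_zero]
    have hnorm : (fun h : E => ‖h‖) =o[𝓝 0] (fun _ => (1 : ℝ)) :=
      (isLittleO_one_iff ℝ).2 (by simpa using (continuous_norm (E := E)).tendsto 0)
    simpa using hnorm.smul_isBigO (isBigO_refl (fun h : E => h) (𝓝 0))
  · refine ((hasFDerivAt_norm hx).smul (hasFDerivAt_id x)).congr_fderiv ?_
    ext v
    simp [fderivNormSmulSelf, smul_smul]

lemma norm_fderivNormSmulSelf_le (x : E) : ‖fderivNormSmulSelf x‖ ≤ 2 * ‖x‖ := by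
  rcases eq_or_ne x 0 with rfl | hx
  · simp [fderivNormSmulSelf]
  calc ‖fderivNormSmulSelf x‖
      ≤ ‖x‖ * ‖ContinuousLinearMap.id ℝ E‖ + ‖x‖⁻¹ * (‖x‖ * ‖x‖) := by
        refine (norm_add_le _ _).trans (add_le_add ?_ ?_) <;>
          simp [norm_smul, ContinuousLinearMap.norm_smulRight_apply, innerSL_apply_norm]
    _ ≤ ‖x‖ * 1 + ‖x‖ := by
        rw [inv_mul_cancel_left₀ (norm_ne_zero_iff.2 hx)]
        gcongr
        exact ContinuousLinearMap.norm_id_le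
    _ = 2 * ‖x‖ := by ring

lemma continuous_fderivNormSmulSelf : Continuous (fderivNormSmulSelf (E := E)) := by
  rw [continuous_iff_continuousAt]
  intro x
  rcases eq_or_ne x 0 with rfl | hx
  · rw [ContinuousAt, show fderivNormSmulSelf (0 : E) = 0 by simp [fderivNormSmulSelf]]
    refine squeeze_zero_norm norm_fderivNormSmulSelf_le ?_
    simpa using ((continuous_norm (E := E)).tendsto 0).const_mul 2
  · have hsmulRight : Continuous fun y : E => (innerSL ℝ y).smulRight y :=
      isBoundedBilinearMap_smulRight.continuous.comp
        ((innerSL ℝ).continuous.prodMk continuous_id)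
    exact (continuous_norm.continuousAt.smul continuousAt_const).add
      ((continuous_norm.continuousAt.inv₀ (norm_ne_zero_iff.2 hx)).smul
        hsmulRight.continuousAt)

theorem contDiff_norm_smul_self : ContDiff ℝ 1 (fun x : E => ‖x‖ • x) :=
  contDiff_one_iff_hasFDerivAt.2
    ⟨fderivNormSmulSelf, continuous_fderivNormSmulSelf, hasFDerivAt_norm_smul_self⟩

end NormSmulSelf

theorem contDiff_sqrt_sq_add_sq_smul :
    ContDiff ℝ 1 (fun p : ℝ × ℝ => √(p.1 ^ 2 + p.2 ^ 2) • p) := by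
  let e := WithLp.prodContinuousLinearEquiv 2 ℝ ℝ ℝ
  have hnorm (p : ℝ × ℝ) : ‖e.symm p‖ = √(p.1 ^ 2 + p.2 ^ 2) := by
    simp [e, WithLp.prod_norm_eq_of_L2]
  convert e.contDiff.comp (contDiff_norm_smul_self.comp e.symm.contDiff) using 2 with p
  simp [hnorm]

theorem FB_sq_contDiff :
    ContDiff ℝ 1 (fun p : ℝ × ℝ => (Real.sqrt (p.1 ^ 2 + p.2 ^ 2) - p.1 - p.2) ^ 2) := by
  have hexpand (p : ℝ × ℝ) : (√(p.1 ^ 2 + p.2 ^ 2) - p.1 - p.2) ^ 2 =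
      (p.1 ^ 2 + p.2 ^ 2) + (p.1 + p.2) ^ 2
        - 2 * ((√(p.1 ^ 2 + p.2 ^ 2) • p).1 + (√(p.1 ^ 2 + p.2 ^ 2) • p).2) := by
    have hsq := Real.sq_sqrt (by positivity : 0 ≤ p.1 ^ 2 + p.2 ^ 2)
    simp only [Prod.smul_fst, Prod.smul_snd, smul_eq_mul]
    linear_combination hsq
  simp_rw [hexpand]
  have hψ := contDiff_sqrt_sq_add_sq_smul
  exact (((contDiff_fst.pow 2).add (contDiff_snd.pow 2)).add
    ((contDiff_fst.add contDiff_snd).pow 2)).sub (contDiff_const.mul (hψ.fst.add hψ.snd))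
end

section
/- There exist constants c, C > 0 such that for all (a,b) ∈ ℝ², c·|π_FB(a,b)| ≤ |min(a,b)| ≤ C·|π_FB(a,b)|, where π_FB(a,b) = √(a² + b²) − a − b. In fact one can take c = (2−√2)/2 and C = (2+√2)/2. -/
lemma sqrt2_sq : Real.sqrt 2 * Real.sqrt 2 = 2 := Real.mul_self_sqrt (by norm_num)

lemma sqrt2_ge : (1:ℝ) ≤ Real.sqrt 2 := by
  nlinarith [sqrt2_sq, Real.sqrt_nonneg 2]

lemma sqrt2_le : Real.sqrt 2 ≤ (2:ℝ) := by
  nlinarith [sqrt2_sq, Real.sqrt_nonneg 2]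

lemma le_of_mul_self_le {s r : ℝ} (hs0 : 0 ≤ s) (hr : 0 ≤ r) (h : s * s ≤ r * r) :
    s ≤ r := by nlinarith [mul_nonneg hs0 hr]

lemma key (a b : ℝ) (hab : a ≤ b) :
    (2 - Real.sqrt 2) * |min a b| ≤ |Real.sqrt (a ^ 2 + b ^ 2) - a - b| ∧
    |Real.sqrt (a ^ 2 + b ^ 2) - a - b| ≤ (2 + Real.sqrt 2) * |min a b| := by
  set s := Real.sqrt (a ^ 2 + b ^ 2) with hsdef
  have hs0 : 0 ≤ s := Real.sqrt_nonneg _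
  have hs : s * s = a ^ 2 + b ^ 2 := Real.mul_self_sqrt (by positivity)
  have h2 := sqrt2_sq
  have h2a := sqrt2_ge
  have h2b := sqrt2_le
  rw [min_eq_left hab]
  have hsb : b ≤ s := by
    have : |b| ≤ s := le_of_mul_self_le (abs_nonneg b) hs0
      (by rw [abs_mul_abs_self]; nlinarith [sq_nonneg a])
    linarith [le_abs_self b]
  rcases le_or_gt b 0 with hb | hb
  · -- a ≤ b ≤ 0
    have ha : a ≤ 0 := hab.trans hb
    have hphi : 0 ≤ s - a - b := by linarith
    rw [abs_of_nonpos ha, abs_of_nonneg hphi]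
    have hsa2 : s ≤ Real.sqrt 2 * (-a) := by
      refine le_of_mul_self_le hs0 (by nlinarith) ?_
      nlinarith [mul_nonneg (sub_nonneg.2 hab) (neg_nonneg.2 (by linarith : a + b ≤ 0))]
    constructor <;> nlinarith
  · rcases le_or_gt 0 a with ha | ha
    · -- 0 ≤ a ≤ b
      have hphi : s - a - b ≤ 0 := by
        have : s ≤ a + b := le_of_mul_self_le hs0 (by linarith) (by nlinarith [mul_nonneg ha hb.le])
        linarith
      rw [abs_of_nonneg ha, abs_of_nonpos hphi]
      have hkey : s ≤ (Real.sqrt 2 - 1) * a + b := by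
        refine le_of_mul_self_le hs0 (by nlinarith) ?_
        nlinarith [mul_nonneg ha (sub_nonneg.2 hab)]
      constructor <;> nlinarith
    · -- a < 0 < b
      have hphi : 0 ≤ s - a - b := by linarith
      rw [abs_of_nonpos ha.le, abs_of_nonneg hphi]
      have hsub : s ≤ b - a := by
        refine le_of_mul_self_le hs0 (by linarith) ?_
        nlinarith [mul_nonneg (neg_nonneg.2 ha.le) hb.le]
      constructor <;> nlinarith

theorem min_FB_equivalence :
    ∃ c C : ℝ, 0 < c ∧ 0 < C ∧
      (∀ a b : ℝ,
        c * |Real.sqrt (a ^ 2 + b ^ 2) - a - b| ≤ |min a b| ∧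
        |min a b| ≤ C * |Real.sqrt (a ^ 2 + b ^ 2) - a - b|) ∧
      c = (2 - Real.sqrt 2) / 2 ∧ C = (2 + Real.sqrt 2) / 2 := by
  have h2 := sqrt2_sq
  have h2a := sqrt2_ge
  have h2b := sqrt2_le
  refine ⟨(2 - Real.sqrt 2) / 2, (2 + Real.sqrt 2) / 2, by nlinarith, by nlinarith, ?_, rfl, rfl⟩
  intro a b
  have hmain : (2 - Real.sqrt 2) * |min a b| ≤ |Real.sqrt (a ^ 2 + b ^ 2) - a - b| ∧
      |Real.sqrt (a ^ 2 + b ^ 2) - a - b| ≤ (2 + Real.sqrt 2) * |min a b| := by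
    rcases le_total a b with hab | hab
    · exact key a b hab
    · have := key b a hab
      rwa [min_comm b a, add_comm (b ^ 2) (a ^ 2),
        show Real.sqrt (a ^ 2 + b ^ 2) - b - a = Real.sqrt (a ^ 2 + b ^ 2) - a - b by ring] at this
  obtain ⟨hL, hU⟩ := hmain
  constructor
  · nlinarith [abs_nonneg (min a b), abs_nonneg (Real.sqrt (a ^ 2 + b ^ 2) - a - b)]
  · nlinarith [abs_nonneg (min a b), abs_nonneg (Real.sqrt (a ^ 2 + b ^ 2) - a - b)]
end

section
/- Define θ₁(a,b,μ,ν) = |π_FB(a,b)|, θ₂(a,b,μ,ν) = π_FB(|a|,|μ|), θ₃(a,b,μ,ν) = π_FB(|b|,|ν|), and θ₄(a,b,μ,ν) = 0 if μ ≤ 0 and ν ≤ 0, otherwise θ₄(a,b,μ,ν) = π_FB(|μ|,|ν|), where π_FB(s,t) = √(s²+t²) − s − t. Then θ(a,b,μ,ν) = (θ₁,θ₂,θ₃,θ₄)(a,b,μ,ν) = 0 if and only if (a,b,μ,ν) ∈ M_M. -/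
noncomputable def piFB (s t : ℝ) : ℝ := Real.sqrt (s ^ 2 + t ^ 2) - s - t

lemma piFB_eq_zero_iff (s t : ℝ) :
    piFB s t = 0 ↔ 0 ≤ s ∧ 0 ≤ t ∧ s * t = 0 := by
  unfold piFB
  constructor
  · intro h
    have hs : Real.sqrt (s ^ 2 + t ^ 2) = s + t := by linarith
    have hnn : 0 ≤ s + t := hs ▸ Real.sqrt_nonneg _
    have hsq : s ^ 2 + t ^ 2 = (s + t) ^ 2 := by
      rw [← hs, Real.sq_sqrt (by positivity)]
    have hst : s * t = 0 := by nlinarith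
    rcases mul_eq_zero.1 hst with h0 | h0 <;>
      constructor <;> first | linarith | (constructor <;> linarith)
  · rintro ⟨hs, ht, hst⟩
    rcases mul_eq_zero.1 hst with h0 | h0
    · subst h0; simp [Real.sqrt_sq ht]
    · subst h0; simp [Real.sqrt_sq hs]

theorem theta_zero_iff_MM (a b μ ν : ℝ) :
    (|piFB a b| = 0 ∧ piFB |a| |μ| = 0 ∧ piFB |b| |ν| = 0 ∧
      (if μ ≤ 0 ∧ ν ≤ 0 then (0:ℝ) else piFB |μ| |ν|) = 0)
    ↔ (0 ≤ a ∧ 0 ≤ b ∧ a * b = 0 ∧ a * μ = 0 ∧ b * ν = 0 ∧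
        (μ * ν = 0 ∨ (μ < 0 ∧ ν < 0))) := by
  rw [abs_eq_zero, piFB_eq_zero_iff, piFB_eq_zero_iff, piFB_eq_zero_iff]
  constructor
  · rintro ⟨⟨ha, hb, hab⟩, ⟨-, -, haμ⟩, ⟨-, -, hbν⟩, h4⟩
    refine ⟨ha, hb, hab, ?_, ?_, ?_⟩
    · rcases mul_eq_zero.1 haμ with h | h <;>
        simp [abs_eq_zero.1 h]
    · rcases mul_eq_zero.1 hbν with h | h <;>
        simp [abs_eq_zero.1 h]
    · by_cases hc : μ ≤ 0 ∧ ν ≤ 0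
      · rcases lt_or_eq_of_le hc.1 with h1 | h1
        · rcases lt_or_eq_of_le hc.2 with h2 | h2
          · exact Or.inr ⟨h1, h2⟩
          · exact Or.inl (by rw [h2, mul_zero])
        · exact Or.inl (by rw [h1, zero_mul])
      · rw [if_neg hc, piFB_eq_zero_iff] at h4
        rcases mul_eq_zero.1 h4.2.2 with h | h <;>
          simp [abs_eq_zero.1 h]
  · rintro ⟨ha, hb, hab, haμ, hbν, h4⟩
    refine ⟨⟨ha, hb, hab⟩, ⟨abs_nonneg _, abs_nonneg _, ?_⟩,
      ⟨abs_nonneg _, abs_nonneg _, ?_⟩, ?_⟩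
    · rw [← abs_mul, abs_eq_zero]; exact haμ
    · rw [← abs_mul, abs_eq_zero]; exact hbν
    · by_cases hc : μ ≤ 0 ∧ ν ≤ 0
      · rw [if_pos hc]
      · rw [if_neg hc, piFB_eq_zero_iff]
        refine ⟨abs_nonneg _, abs_nonneg _, ?_⟩
        rw [← abs_mul, abs_eq_zero]
        rcases h4 with h | ⟨h1, h2⟩
        · exact h
        · exact absurd ⟨h1.le, h2.le⟩ hc
end

section
/- Let (μ⁰, ν⁰) and (μ¹, ν¹) be two pairs of reals with μ⁰ ≤ 0 and ν¹ ≤ 0. Then there exists t ∈ [0,1] such that the convex combination (μ,ν) = (1−t)·(μ⁰,ν⁰) + t·(μ¹,ν¹) satisfies the M-stationarity sign condition (μ < 0 ∧ ν < 0) ∨ μ·ν = 0. -/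
theorem convex_combination_M_stationary (μ₀ ν₀ μ₁ ν₁ : ℝ) (h₀ : μ₀ ≤ 0) (h₁ : ν₁ ≤ 0) :
    ∃ t : ℝ, t ∈ Set.Icc (0:ℝ) 1 ∧
      (((1 - t) * μ₀ + t * μ₁ < 0 ∧ (1 - t) * ν₀ + t * ν₁ < 0) ∨
        ((1 - t) * μ₀ + t * μ₁) * ((1 - t) * ν₀ + t * ν₁) = 0) := by
  rcases eq_or_lt_of_le h₀ with h0 | h0
  · exact ⟨0, ⟨le_refl _, zero_le_one⟩, Or.inr (by simp [h0])⟩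
  rcases eq_or_lt_of_le h₁ with h1 | h1
  · exact ⟨1, ⟨zero_le_one, le_refl _⟩, Or.inr (by simp [h1])⟩
  rcases lt_or_ge ν₀ 0 with hν | hν
  · exact ⟨0, ⟨le_refl _, zero_le_one⟩, Or.inl ⟨by simpa using h0, by simpa using hν⟩⟩
  rcases lt_or_ge μ₁ 0 with hμ | hμ
  · exact ⟨1, ⟨zero_le_one, le_refl _⟩, Or.inl ⟨by simpa using hμ, by simpa using h1⟩⟩
  -- now μ₀ < 0 ≤ μ₁; choose t where the μ-component vanishes
  have hd : μ₀ - μ₁ < 0 := by linarith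
  refine ⟨μ₀ / (μ₀ - μ₁), ⟨?_, ?_⟩, Or.inr ?_⟩
  · exact le_of_lt (div_pos_of_neg_of_neg h0 hd)
  · rw [div_le_one_of_neg hd]; linarith
  · have hne : μ₀ - μ₁ ≠ 0 := ne_of_lt hd
    have : (1 - μ₀ / (μ₀ - μ₁)) * μ₀ + μ₀ / (μ₀ - μ₁) * μ₁ = 0 := by
      field_simp
      ring
    rw [this, zero_mul]
end

section
/- Chain rule for Newton differentiability: if Φ : ℝⁿ → ℝᵐ is Newton differentiable on X ⊂ ℝⁿ with Newton derivative DΦ, and Ψ : ℝᵐ → ℝᵏ is Newton differentiable on Φ(X) with Newton derivative DΨ such that DΨ is bounded near Φ(X) and DΦ is bounded near X and Φ is Lipschitz near X, then Ψ ∘ Φ is Newton differentiable on X with Newton derivative x ↦ DΨ(Φ(x))·DΦ(x). -/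
/-- `Φ` is Newton differentiable on `X` with Newton derivative `DΦ`. -/
def NewtonDifferentiableOn {E F : Type*} [NormedAddCommGroup E] [NormedSpace ℝ E]
    [NormedAddCommGroup F] [NormedSpace ℝ F]
    (Φ : E → F) (DΦ : E → E →L[ℝ] F) (X : Set E) : Prop :=
  ∀ x ∈ X, ∀ ε > (0:ℝ), ∃ δ > (0:ℝ), ∀ d : E, ‖d‖ ≤ δ →
    ‖Φ (x + d) - Φ x - DΦ (x + d) d‖ ≤ ε * ‖d‖

theorem newton_chain_rule {E F G : Type*} [NormedAddCommGroup E] [NormedSpace ℝ E]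
    [NormedAddCommGroup F] [NormedSpace ℝ F] [NormedAddCommGroup G] [NormedSpace ℝ G]
    (Φ : E → F) (DΦ : E → E →L[ℝ] F) (Ψ : F → G) (DΨ : F → F →L[ℝ] G) (X : Set E)
    (hΦ : NewtonDifferentiableOn Φ DΦ X)
    (hΨ : NewtonDifferentiableOn Ψ DΨ (Φ '' X))
    (hDΨbd : ∃ M : ℝ, ∃ r > (0:ℝ), ∀ y ∈ Metric.thickening r (Φ '' X), ‖DΨ y‖ ≤ M)
    (hDΦbd : ∃ M : ℝ, ∃ r > (0:ℝ), ∀ x ∈ Metric.thickening r X, ‖DΦ x‖ ≤ M)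
    (hΦlip : ∃ L : NNReal, ∃ r > (0:ℝ), LipschitzOnWith L Φ (Metric.thickening r X)) :
    NewtonDifferentiableOn (Ψ ∘ Φ) (fun x => (DΨ (Φ x)).comp (DΦ x)) X := by
  obtain ⟨M₀, r₁, hr₁, hM⟩ := hDΨbd
  obtain ⟨L, rL, hrL, hLip⟩ := hΦlip
  set M : ℝ := max M₀ 0 with hMdef
  have hM0 : (0:ℝ) ≤ M := le_max_right _ _
  have hL0 : (0:ℝ) ≤ (L:ℝ) := L.coe_nonneg
  intro x hx ε hε
  obtain ⟨δ₁, hδ₁, h₁⟩ := hΨ (Φ x) ⟨x, hx, rfl⟩ (ε/(2*((L:ℝ)+1))) (by positivity)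
  obtain ⟨δ₂, hδ₂, h₂⟩ := hΦ x hx (ε/(2*(M+1))) (by positivity)
  refine ⟨min (min (δ₁/((L:ℝ)+1)) δ₂) (min (rL/2) (r₁/(2*((L:ℝ)+1)))), by positivity, ?_⟩
  intro d hd
  have hd1 : ‖d‖ ≤ δ₁/((L:ℝ)+1) := le_trans hd (le_trans (min_le_left _ _) (min_le_left _ _))
  have hd2 : ‖d‖ ≤ δ₂ := le_trans hd (le_trans (min_le_left _ _) (min_le_right _ _))
  have hd3 : ‖d‖ ≤ rL/2 := le_trans hd (le_trans (min_le_right _ _) (min_le_left _ _))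
  have hd4 : ‖d‖ ≤ r₁/(2*((L:ℝ)+1)) :=
    le_trans hd (le_trans (min_le_right _ _) (min_le_right _ _))
  have hdn : (0:ℝ) ≤ ‖d‖ := norm_nonneg d
  -- memberships in thickenings
  have hxmem : x ∈ Metric.thickening rL X := Metric.self_subset_thickening hrL X hx
  have hdistxd : dist (x + d) x = ‖d‖ := by simp [dist_eq_norm]
  have hxd : x + d ∈ Metric.thickening rL X := by
    rw [Metric.mem_thickening_iff]
    exact ⟨x, hx, by rw [hdistxd]; linarith⟩
  -- Lipschitz bound on e := Φ(x+d) - Φ x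
  have he : ‖Φ (x + d) - Φ x‖ ≤ (L:ℝ) * ‖d‖ := by
    have := hLip.dist_le_mul (x + d) hxd x hxmem
    rwa [dist_eq_norm, hdistxd] at this
  -- Φ(x+d) lies in the r₁-thickening of Φ '' X
  have hΦxd : Φ (x + d) ∈ Metric.thickening r₁ (Φ '' X) := by
    rw [Metric.mem_thickening_iff]
    refine ⟨Φ x, ⟨x, hx, rfl⟩, ?_⟩
    rw [dist_eq_norm]
    have h1 : (L:ℝ) * ‖d‖ ≤ (L:ℝ) * (r₁/(2*((L:ℝ)+1))) :=
      mul_le_mul_of_nonneg_left hd4 hL0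
    have h2 : (L:ℝ) * (r₁/(2*((L:ℝ)+1))) < r₁ := by
      rw [mul_div_assoc', div_lt_iff₀ (by positivity)]
      nlinarith
    linarith
  have hDΨbd' : ‖DΨ (Φ (x + d))‖ ≤ M := le_trans (hM _ hΦxd) (le_max_left _ _)
  -- apply Ψ's Newton differentiability with increment e
  have heδ : ‖Φ (x + d) - Φ x‖ ≤ δ₁ := by
    have : (L:ℝ) * ‖d‖ ≤ (L:ℝ) * (δ₁/((L:ℝ)+1)) := mul_le_mul_of_nonneg_left hd1 hL0
    have h2 : (L:ℝ) * (δ₁/((L:ℝ)+1)) ≤ δ₁ := by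
      rw [mul_div_assoc']
      rw [div_le_iff₀ (by positivity)]
      nlinarith
    linarith
  have hA := h₁ (Φ (x + d) - Φ x) heδ
  rw [add_sub_cancel] at hA
  have hB := h₂ d hd2
  -- decompose
  have key : (Ψ ∘ Φ) (x + d) - (Ψ ∘ Φ) x - ((DΨ (Φ (x + d))).comp (DΦ (x + d))) d
      = (Ψ (Φ (x + d)) - Ψ (Φ x) - DΨ (Φ (x + d)) (Φ (x + d) - Φ x))
        + DΨ (Φ (x + d)) (Φ (x + d) - Φ x - DΦ (x + d) d) := by
    simp only [Function.comp_apply, ContinuousLinearMap.comp_apply, map_sub]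
    abel
  rw [key]
  have hnormB : ‖DΨ (Φ (x + d)) (Φ (x + d) - Φ x - DΦ (x + d) d)‖
      ≤ M * (ε/(2*(M+1)) * ‖d‖) := by
    calc ‖DΨ (Φ (x + d)) (Φ (x + d) - Φ x - DΦ (x + d) d)‖
        ≤ ‖DΨ (Φ (x + d))‖ * ‖Φ (x + d) - Φ x - DΦ (x + d) d‖ :=
          (DΨ (Φ (x + d))).le_opNorm _
      _ ≤ M * (ε/(2*(M+1)) * ‖d‖) := by
          apply mul_le_mul hDΨbd' hB (norm_nonneg _) hM0
  have hnormA : ‖Ψ (Φ (x + d)) - Ψ (Φ x) - DΨ (Φ (x + d)) (Φ (x + d) - Φ x)‖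
      ≤ ε/(2*((L:ℝ)+1)) * ((L:ℝ) * ‖d‖) := by
    refine le_trans hA ?_
    exact mul_le_mul_of_nonneg_left he (by positivity)
  calc ‖(Ψ (Φ (x + d)) - Ψ (Φ x) - DΨ (Φ (x + d)) (Φ (x + d) - Φ x))
        + DΨ (Φ (x + d)) (Φ (x + d) - Φ x - DΦ (x + d) d)‖
      ≤ ‖Ψ (Φ (x + d)) - Ψ (Φ x) - DΨ (Φ (x + d)) (Φ (x + d) - Φ x)‖
        + ‖DΨ (Φ (x + d)) (Φ (x + d) - Φ x - DΦ (x + d) d)‖ := norm_add_le _ _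
    _ ≤ ε/(2*((L:ℝ)+1)) * ((L:ℝ) * ‖d‖) + M * (ε/(2*(M+1)) * ‖d‖) :=
        add_le_add hnormA hnormB
    _ ≤ ε * ‖d‖ := by
        have hL1 : (0:ℝ) < (L:ℝ) + 1 := by positivity
        have hM1 : (0:ℝ) < M + 1 := by positivity
        have t1 : ε/(2*((L:ℝ)+1)) * ((L:ℝ) * ‖d‖) ≤ ε * ‖d‖ / 2 := by
          rw [div_mul_eq_mul_div, div_le_div_iff₀ (by positivity) (by positivity)]
          nlinarith [mul_nonneg hε.le hdn, mul_nonneg (mul_nonneg hε.le hdn) hL0]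
        have t2 : M * (ε/(2*(M+1)) * ‖d‖) ≤ ε * ‖d‖ / 2 := by
          rw [div_mul_eq_mul_div, mul_div_assoc', div_le_div_iff₀ (by positivity) (by positivity)]
          nlinarith [mul_nonneg hε.le hdn, mul_nonneg (mul_nonneg hε.le hdn) hM0]
        linarith
end
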